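/- arXiv:2506.22030 — 6 statements merged into one kernel-verified Lean document; each statement's English description precedes it below -/
import Mathlib

section
/- Let m ≥ 2k ≥ 2 and let α : {1,…,m} → F be a function to an infinite field (or ℂ). Then the following are equivalent: (1) for every choice of 2k distinct indices i_1, j_1, …, i_k, j_k in {1,…,m}, the product ∏_{s=1}^{k} (α_{i_s} − α_{j_s}) vanishes; (2) there exists a value v such that α_i = v for at least m − k + 1 indices i. -/
/-!
If one value fills at least `m - k + 1` coordinates, at most `k - 1` indices lie outside its
fibre, so one of `k` disjoint pairs lies inside it and its factor vanishes. Conversely, if every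
fibre has at most `d = m - k` elements, sort the coordinates along any linear order and pair
position `t` with `t + d` for `t < k`: equal values at both ends of a pair would fill the `d + 1`
positions in between with a single value.
-/

open Finset Function

theorem exists_eq_eq_of_card_lt_add_card_fiber {ι β : Type*} [Fintype ι] [DecidableEq β]
    {k : ℕ} {f : ι → β} {v : β} {i j : Fin k → ι} (hij : Injective (Sum.elim i j))
    (hv : Fintype.card ι < k + #{x | f x = v}) :
    ∃ s, f (i s) = v ∧ f (j s) = v := by
  by_contra! hpair
  let pick : Fin k → Fin k ⊕ Fin k := fun s => if f (i s) = v then .inr s else .inl s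
  have hpick : Injective pick :=
    LeftInverse.injective (g := Sum.elim id id) fun s => by unfold pick; split_ifs <;> rfl
  have hout : ∀ s, f (Sum.elim i j (pick s)) ≠ v := fun s => by
    unfold pick; split_ifs with h
    exacts [hpair s h, h]
  have hk : k ≤ #{x | ¬f x = v} := by
    simpa using card_le_card_of_injOn (s := univ) (t := {x | ¬f x = v}) (Sum.elim i j ∘ pick)
      (fun s _ => by simpa using hout s) (hij.comp hpick).injOn
  have := card_filter_add_card_filter_not (s := univ) (fun x => f x = v)
  simp only [card_univ] at this
  omega

theorem card_Icc_le_card_fiber_of_monotone {n : ℕ} {β : Type*} [PartialOrder β] [DecidableEq β]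
    {g : Fin n → β} (hg : Monotone g) {a b : Fin n} (hab : g a = g b) :
    #(Icc a b) ≤ #{x | g x = g a} :=
  card_le_card fun x hx => by
    rw [mem_Icc] at hx
    simpa using le_antisymm (hab ▸ hg hx.2) (hg hx.1)

theorem exists_matching_ne_of_card_fiber_le {β : Type*} [DecidableEq β] {m k : ℕ}
    (hm : 2 * k ≤ m) (f : Fin m → β) (hf : ∀ v, #{x | f x = v} ≤ m - k) :
    ∃ i j : Fin k → Fin m, Injective (Sum.elim i j) ∧ ∀ s, f (i s) ≠ f (j s) := by
  let _ : LinearOrder β := IsWellOrder.linearOrder WellOrderingRel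
  set σ := Tuple.sort f
  let p : Fin k → Fin m := fun s => ⟨s, by omega⟩
  let q : Fin k → Fin m := fun s => ⟨s + (m - k), by omega⟩
  refine ⟨σ ∘ p, σ ∘ q, ?_, fun s hs => ?_⟩
  · rw [← Sum.comp_elim]
    refine σ.injective.comp (Injective.sumElim ?_ ?_ fun a b h => ?_)
    · exact fun a b h => Fin.ext (by simpa [p] using h)
    · exact fun a b h => Fin.ext (by simpa [q] using h)
    · have : (a : ℕ) = b + (m - k) := congrArg Fin.val h
      omega
  · have hIcc : #(Icc (p s) (q s)) ≤ #{x | f (σ x) = f (σ (p s))} :=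
      card_Icc_le_card_fiber_of_monotone (Tuple.monotone_sort f) hs
    have hperm : #{x | f (σ x) = f (σ (p s))} = #{x | f x = f (σ (p s))} :=
      card_equiv σ (by simp)
    have := hf (f (σ (p s)))
    rw [Fin.card_Icc] at hIcc
    change (s : ℕ) + (m - k) + 1 - s ≤ _ at hIcc
    omega

theorem base_locus_matching_products_general (m k : ℕ) (hm : 2 * k ≤ m)
    (α : Fin m → ℂ) :
    (∀ i j : Fin k → Fin m,
        Function.Injective (Sum.elim i j : Fin k ⊕ Fin k → Fin m) →
        (∏ s, (α (i s) - α (j s))) = 0)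
      ↔ ∃ v : ℂ, m - k + 1 ≤ (Finset.univ.filter (fun x : Fin m => α x = v)).card := by
  constructor
  · intro h
    by_contra! hfib
    obtain ⟨i, j, hij, hne⟩ :=
      exists_matching_ne_of_card_fiber_le hm α fun v => Nat.le_of_lt_succ (hfib v)
    obtain ⟨s, -, hs⟩ := prod_eq_zero_iff.mp (h i j hij)
    exact hne s (sub_eq_zero.mp hs)
  · rintro ⟨v, hv⟩ i j hij
    obtain ⟨s, hi, hj⟩ := exists_eq_eq_of_card_lt_add_card_fiber hij (f := α) (v := v)
      (by rw [Fintype.card_fin]; omega)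
    exact prod_eq_zero (mem_univ s) (by rw [hi, hj, sub_self])

/-- Base locus of the map `C_{m,k}`: for `m ≥ 2k ≥ 2` and `α : {1,…,m} → ℂ`,
all products `∏_{s} (α_{i_s} − α_{j_s})` over `2k` distinct indices vanish
iff some value is taken by at least `m − k + 1` of the coordinates. -/
theorem base_locus_matching_products (m k : ℕ) (hk : 1 ≤ k) (hm : 2 * k ≤ m)
    (α : Fin m → ℂ) :
    (∀ i j : Fin k → Fin m,
        Function.Injective (Sum.elim i j : Fin k ⊕ Fin k → Fin m) →
        (∏ s, (α (i s) - α (j s))) = 0)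
      ↔ ∃ v : ℂ, m - k + 1 ≤ (Finset.univ.filter (fun x : Fin m => α x = v)).card :=
  base_locus_matching_products_general m k hm α
end

section
/- Let v_1, …, v_k ∈ ℂ^m span a subspace isotropic for the standard symmetric bilinear form, i.e. ∑_{a=1}^{m} v_s(a) v_t(a) = 0 for all 1 ≤ s, t ≤ k. For a k-tuple of column indices I = (i_1,…,i_k), let p_I = det( v_s(i_t) )_{s,t}. Then for any two (k−1)-tuples J and K of indices, ∑_{a=1}^{m} p_{(a,J)} · p_{(a,K)} = 0, where (a,J) denotes the k-tuple obtained by prepending a to J. In particular ∑_{a=1}^{m} p_{(a,J)}^2 = 0 for every (k−1)-tuple J. -/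
/-- Quadratic relations among Plücker coordinates of an isotropic `(k+1)`-plane:
if the rows `v s` are pairwise orthogonal for the standard symmetric form,
then `∑_a p_{(a,J)} p_{(a,K)} = 0`, and in particular `∑_a p_{(a,J)}² = 0`. -/
theorem isotropic_plucker_quadratic_relations (k m : ℕ)
    (v : Fin (k + 1) → Fin m → ℂ)
    (hiso : ∀ s t : Fin (k + 1), (∑ a, v s a * v t a) = 0)
    (J K : Fin k → Fin m) :
    (∑ a : Fin m,
        (Matrix.of fun s t => v s ((Fin.cons a J : Fin (k + 1) → Fin m) t)).det
          * (Matrix.of fun s t => v s ((Fin.cons a K : Fin (k + 1) → Fin m) t)).det) = 0 ∧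
    (∑ a : Fin m,
        ((Matrix.of fun s t => v s ((Fin.cons a J : Fin (k + 1) → Fin m) t)).det) ^ 2) = 0 := by
  have key : ∀ (w : Fin k → Fin m) (a : Fin m),
      (Matrix.of fun s t => v s ((Fin.cons a w : Fin (k + 1) → Fin m) t)).det
        = ∑ i : Fin (k + 1), (-1) ^ (i : ℕ) * v i a
            * (Matrix.of fun s t => v (i.succAbove s) (w t)).det := by
    intro w a
    rw [Matrix.det_succ_column_zero]
    refine Finset.sum_congr rfl fun i _ => ?_
    simp [Matrix.submatrix, mul_assoc]
  have main : ∀ (P Q : Fin k → Fin m),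
      (∑ a : Fin m,
        (Matrix.of fun s t => v s ((Fin.cons a P : Fin (k + 1) → Fin m) t)).det
          * (Matrix.of fun s t => v s ((Fin.cons a Q : Fin (k + 1) → Fin m) t)).det) = 0 := by
    intro P Q
    simp_rw [key, Finset.sum_mul_sum]
    rw [Finset.sum_comm]
    refine Finset.sum_eq_zero fun i _ => ?_
    rw [Finset.sum_comm]
    refine Finset.sum_eq_zero fun j _ => ?_
    have h : ∀ a : Fin m,
        ((-1) ^ (i : ℕ) * v i a * (Matrix.of fun s t => v (i.succAbove s) (P t)).det)
          * ((-1) ^ (j : ℕ) * v j a * (Matrix.of fun s t => v (j.succAbove s) (Q t)).det)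
        = ((-1) ^ (i : ℕ) * (Matrix.of fun s t => v (i.succAbove s) (P t)).det
            * ((-1) ^ (j : ℕ) * (Matrix.of fun s t => v (j.succAbove s) (Q t)).det))
          * (v i a * v j a) := fun a => by ring
    simp_rw [h]
    rw [← Finset.mul_sum, hiso i j, mul_zero]
  refine ⟨main J K, ?_⟩
  simp_rw [pow_two]
  exact main J J
end

section
/- Let κ : (ℤ/2)^3 → ℂ^× be a function such that ∏_{x ∈ (ℤ/2)^3} κ(x) = 1 and κ(0)·κ(a)·κ(b)·κ(a+b) = 1 for every pair of distinct nonzero elements a, b of (ℤ/2)^3. Then: (1) (κ(0)·κ(x))^2 = 1 for every nonzero x; (2) κ(0)^4 = 1; and (3) setting e(x) = κ(0)·κ(x) ∈ {±1} for x ≠ 0, one has e(a+b) = κ(0)^2 · e(a) · e(b) for all distinct nonzero a, b. In particular, if κ(0) = 1, the map x ↦ e(x) (extended by e(0)=1) is a group homomorphism (ℤ/2)^3 → {±1}. -/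
/-- Structure of the diagonal part of the centralizer of a Cartan subspace:
if `κ : (ℤ/2)³ → ℂ^×` has total product `1` and `κ(0)κ(a)κ(b)κ(a+b) = 1` for
every Fano line, then `(κ(0)κ(x))² = 1`, `κ(0)⁴ = 1`, the signs
`e(x) = κ(0)κ(x)` satisfy `e(a+b) = κ(0)² e(a) e(b)`, and if `κ(0) = 1`
then `e` (extended by `e(0) = 1`) is a homomorphism to `{±1}`. -/
theorem cartan_centralizer_diagonal (κ : (Fin 3 → ZMod 2) → ℂ)
    (hunit : ∀ x, κ x ≠ 0)
    (hprod : (∏ x : Fin 3 → ZMod 2, κ x) = 1)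
    (hline : ∀ a b : Fin 3 → ZMod 2, a ≠ 0 → b ≠ 0 → a ≠ b →
      κ 0 * κ a * κ b * κ (a + b) = 1) :
    (∀ x : Fin 3 → ZMod 2, x ≠ 0 → (κ 0 * κ x) ^ 2 = 1) ∧
    (κ 0) ^ 4 = 1 ∧
    (∀ a b : Fin 3 → ZMod 2, a ≠ 0 → b ≠ 0 → a ≠ b →
      κ 0 * κ (a + b) = (κ 0) ^ 2 * (κ 0 * κ a) * (κ 0 * κ b)) ∧
    (κ 0 = 1 → ∀ a b : Fin 3 → ZMod 2,
      (if a + b = 0 then (1 : ℂ) else κ 0 * κ (a + b))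
        = (if a = 0 then (1 : ℂ) else κ 0 * κ a)
          * (if b = 0 then (1 : ℂ) else κ 0 * κ b)) := by
  have hP : κ 0 * (κ ![1,0,0] * κ ![0,1,0] * κ ![1,1,0] * κ ![0,0,1] * κ ![1,0,1] * κ ![0,1,1] * κ ![1,1,1]) = 1 := by
    have h : (Finset.univ : Finset (Fin 3 → ZMod 2)) =
        {0, ![1,0,0], ![0,1,0], ![1,1,0], ![0,0,1], ![1,0,1], ![0,1,1], ![1,1,1]} := by decide
    rw [h, Finset.prod_insert (by decide), Finset.prod_insert (by decide),
      Finset.prod_insert (by decide), Finset.prod_insert (by decide),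
      Finset.prod_insert (by decide), Finset.prod_insert (by decide),
      Finset.prod_insert (by decide), Finset.prod_singleton] at hprod
    linear_combination hprod
  have l123 : κ 0 * κ ![1,0,0] * κ ![0,1,0] * κ ![1,1,0] = 1 := by
    have h := hline ![1,0,0] ![0,1,0] (by decide) (by decide) (by decide)
    rwa [show (![1,0,0] + ![0,1,0] : Fin 3 → ZMod 2) = ![1,1,0] by decide] at h
  have l145 : κ 0 * κ ![1,0,0] * κ ![0,0,1] * κ ![1,0,1] = 1 := by
    have h := hline ![1,0,0] ![0,0,1] (by decide) (by decide) (by decide)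
    rwa [show (![1,0,0] + ![0,0,1] : Fin 3 → ZMod 2) = ![1,0,1] by decide] at h
  have l167 : κ 0 * κ ![1,0,0] * κ ![0,1,1] * κ ![1,1,1] = 1 := by
    have h := hline ![1,0,0] ![0,1,1] (by decide) (by decide) (by decide)
    rwa [show (![1,0,0] + ![0,1,1] : Fin 3 → ZMod 2) = ![1,1,1] by decide] at h
  have l246 : κ 0 * κ ![0,1,0] * κ ![0,0,1] * κ ![0,1,1] = 1 := by
    have h := hline ![0,1,0] ![0,0,1] (by decide) (by decide) (by decide)
    rwa [show (![0,1,0] + ![0,0,1] : Fin 3 → ZMod 2) = ![0,1,1] by decide] at h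
  have l257 : κ 0 * κ ![0,1,0] * κ ![1,0,1] * κ ![1,1,1] = 1 := by
    have h := hline ![0,1,0] ![1,0,1] (by decide) (by decide) (by decide)
    rwa [show (![0,1,0] + ![1,0,1] : Fin 3 → ZMod 2) = ![1,1,1] by decide] at h
  have l347 : κ 0 * κ ![1,1,0] * κ ![0,0,1] * κ ![1,1,1] = 1 := by
    have h := hline ![1,1,0] ![0,0,1] (by decide) (by decide) (by decide)
    rwa [show (![1,1,0] + ![0,0,1] : Fin 3 → ZMod 2) = ![1,1,1] by decide] at h
  have l356 : κ 0 * κ ![1,1,0] * κ ![1,0,1] * κ ![0,1,1] = 1 := by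
    have h := hline ![1,1,0] ![1,0,1] (by decide) (by decide) (by decide)
    rwa [show (![1,1,0] + ![1,0,1] : Fin 3 → ZMod 2) = ![0,1,1] by decide] at h
  have hA : (κ 0 * κ ![1,0,0] * κ ![0,1,0] * κ ![1,1,0]) * (κ 0 * κ ![1,0,0] * κ ![0,0,1] * κ ![1,0,1]) * (κ 0 * κ ![1,0,0] * κ ![0,1,1] * κ ![1,1,1]) * (κ 0 * κ ![0,1,0] * κ ![0,0,1] * κ ![0,1,1]) * (κ 0 * κ ![0,1,0] * κ ![1,0,1] * κ ![1,1,1]) * (κ 0 * κ ![1,1,0] * κ ![0,0,1] * κ ![1,1,1]) * (κ 0 * κ ![1,1,0] * κ ![1,0,1] * κ ![0,1,1]) = 1 := by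
    rw [l123, l145, l167, l246, l257, l347, l356]; norm_num
  have hP3 : (κ 0 * (κ ![1,0,0] * κ ![0,1,0] * κ ![1,1,0] * κ ![0,0,1] * κ ![1,0,1] * κ ![0,1,1] * κ ![1,1,1])) * (κ 0 * (κ ![1,0,0] * κ ![0,1,0] * κ ![1,1,0] * κ ![0,0,1] * κ ![1,0,1] * κ ![0,1,1] * κ ![1,1,1])) * (κ 0 * (κ ![1,0,0] * κ ![0,1,0] * κ ![1,1,0] * κ ![0,0,1] * κ ![1,0,1] * κ ![0,1,1] * κ ![1,1,1])) = 1 := by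
    rw [hP]; norm_num
  have h4 : (κ 0) ^ 4 = 1 := by
    linear_combination hA - (κ 0)^4 * hP3
  have hc : ∀ x : Fin 3 → ZMod 2, x = 0 ∨ x = ![1,0,0] ∨ x = ![0,1,0] ∨ x = ![1,1,0] ∨ x = ![0,0,1] ∨ x = ![1,0,1] ∨ x = ![0,1,1] ∨ x = ![1,1,1] := by decide
  have sq : ∀ x : Fin 3 → ZMod 2, x ≠ 0 → (κ 0 * κ x) ^ 2 = 1 := by
    intro x hx
    rcases hc x with h|h|h|h|h|h|h|h
    · exact absurd h hx
    · subst h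
      have hB : (κ 0 * κ ![1,0,0] * κ ![0,1,0] * κ ![1,1,0]) * (κ 0 * κ ![1,0,0] * κ ![0,0,1] * κ ![1,0,1]) * (κ 0 * κ ![1,0,0] * κ ![0,1,1] * κ ![1,1,1]) = 1 := by rw [l123, l145, l167]; norm_num
      linear_combination hB - (κ 0 * κ ![1,0,0])^2 * hP
    · subst h
      have hB : (κ 0 * κ ![1,0,0] * κ ![0,1,0] * κ ![1,1,0]) * (κ 0 * κ ![0,1,0] * κ ![0,0,1] * κ ![0,1,1]) * (κ 0 * κ ![0,1,0] * κ ![1,0,1] * κ ![1,1,1]) = 1 := by rw [l123, l246, l257]; norm_num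
      linear_combination hB - (κ 0 * κ ![0,1,0])^2 * hP
    · subst h
      have hB : (κ 0 * κ ![1,0,0] * κ ![0,1,0] * κ ![1,1,0]) * (κ 0 * κ ![1,1,0] * κ ![0,0,1] * κ ![1,1,1]) * (κ 0 * κ ![1,1,0] * κ ![1,0,1] * κ ![0,1,1]) = 1 := by rw [l123, l347, l356]; norm_num
      linear_combination hB - (κ 0 * κ ![1,1,0])^2 * hP
    · subst h
      have hB : (κ 0 * κ ![1,0,0] * κ ![0,0,1] * κ ![1,0,1]) * (κ 0 * κ ![0,1,0] * κ ![0,0,1] * κ ![0,1,1]) * (κ 0 * κ ![1,1,0] * κ ![0,0,1] * κ ![1,1,1]) = 1 := by rw [l145, l246, l347]; norm_num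
      linear_combination hB - (κ 0 * κ ![0,0,1])^2 * hP
    · subst h
      have hB : (κ 0 * κ ![1,0,0] * κ ![0,0,1] * κ ![1,0,1]) * (κ 0 * κ ![0,1,0] * κ ![1,0,1] * κ ![1,1,1]) * (κ 0 * κ ![1,1,0] * κ ![1,0,1] * κ ![0,1,1]) = 1 := by rw [l145, l257, l356]; norm_num
      linear_combination hB - (κ 0 * κ ![1,0,1])^2 * hP
    · subst h
      have hB : (κ 0 * κ ![1,0,0] * κ ![0,1,1] * κ ![1,1,1]) * (κ 0 * κ ![0,1,0] * κ ![0,0,1] * κ ![0,1,1]) * (κ 0 * κ ![1,1,0] * κ ![1,0,1] * κ ![0,1,1]) = 1 := by rw [l167, l246, l356]; norm_num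
      linear_combination hB - (κ 0 * κ ![0,1,1])^2 * hP
    · subst h
      have hB : (κ 0 * κ ![1,0,0] * κ ![0,1,1] * κ ![1,1,1]) * (κ 0 * κ ![0,1,0] * κ ![1,0,1] * κ ![1,1,1]) * (κ 0 * κ ![1,1,0] * κ ![0,0,1] * κ ![1,1,1]) = 1 := by rw [l167, l257, l347]; norm_num
      linear_combination hB - (κ 0 * κ ![1,1,1])^2 * hP
  have p3 : ∀ a b : Fin 3 → ZMod 2, a ≠ 0 → b ≠ 0 → a ≠ b →
      κ 0 * κ (a + b) = (κ 0) ^ 2 * (κ 0 * κ a) * (κ 0 * κ b) := by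
    intro a b ha hb hab
    have lab := hline a b ha hb hab
    have hsab : (κ 0 * κ a) ^ 2 * (κ 0 * κ b) ^ 2 = 1 := by
      rw [sq a ha, sq b hb]; norm_num
    have hne : (κ 0)^2 * κ a * κ b ≠ 0 :=
      mul_ne_zero (mul_ne_zero (pow_ne_zero _ (hunit 0)) (hunit a)) (hunit b)
    apply mul_left_cancel₀ hne
    linear_combination (κ 0)^2 * lab - (κ 0)^2 * hsab
  have hself : ∀ c : Fin 3 → ZMod 2, c + c = 0 := by decide
  refine ⟨sq, h4, p3, ?_⟩
  intro h0 a b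
  by_cases ha : a = 0
  · subst ha; simp
  by_cases hb : b = 0
  · subst hb; simp
  by_cases hab : a = b
  · subst hab
    rw [hself a, if_pos rfl, if_neg ha]
    linear_combination -(sq a ha)
  · have hab0 : a + b ≠ 0 := by
      intro h
      exact hab (by calc a = a + (a + b) := by rw [h, add_zero]
        _ = b := by rw [← add_assoc, hself, zero_add])
    rw [if_neg hab0, if_neg ha, if_neg hb]
    have h3 := p3 a b ha hb hab
    rw [h0] at h3 ⊢
    linear_combination h3
end

section
/- Let n ≥ 1 and let u, v ∈ ℂ^{2n}, with coordinates indexed so that the hyperbolic bilinear form is B(x,y) = ∑_{i=1}^{n} (x_i y_{n+i} + x_{n+i} y_i). Assume B(u,u) = B(v,v) = B(u,v) = 0 (the plane spanned by u,v is isotropic). Write p(a,b) = u_a v_b − u_b v_a for the Plücker coordinates, and set I_0 = ∑_{i=1}^n p(i, n+i)^2, I_1 = ∑_{i<j} p(i,n+i) p(j,n+j), I_2 = ∑_{i<j} p(i,j) p(n+i,n+j), I_3 = ∑_{i<j} p(i,n+j) p(j,n+i). Then I_2 = I_1/2 + I_0/4 and I_3 = I_1/2 − I_0/4. -/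
/-!
Write `α = efPairing u v`, `β = efPairing v u`, `σ = efPairing u u`, `τ = efPairing v v`. Summed
over all pairs `(i, j)`, each of the three quadratic expressions factors through single sums:
`∑ p(eᵢ,eⱼ) p(fᵢ,fⱼ) = 2(στ - αβ)`, `∑ p(eᵢ,fᵢ) p(eⱼ,fⱼ) = (α - β)²` and
`∑ p(eᵢ,fⱼ) p(eⱼ,fᵢ) = α² + β² - 2στ`. Isotropy gives `σ = 0` and `β = -α`, so these are
`2α², 4α², 2α²`. Each summand is symmetric in `(i, j)`, so the full sum is twice the sum over
`i < j` plus the diagonal, which is `0`, `I₀`, `I₀` respectively; the identities follow.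
-/

/-- Plücker coordinate of the plane spanned by `u, v`. -/
def pluck {n : ℕ} (u v : Fin n ⊕ Fin n → ℂ) (a b : Fin n ⊕ Fin n) : ℂ :=
  u a * v b - u b * v a

open Finset

theorem Finset.sum_sum_eq_two_nsmul_sum_sum_Ioi_add_sum_diag {ι M : Type*} [Fintype ι]
    [LinearOrder ι] [LocallyFiniteOrderTop ι] [LocallyFiniteOrderBot ι] [AddCommMonoid M]
    (g : ι → ι → M) (hg : ∀ i j, g i j = g j i) :
    ∑ i, ∑ j, g i j = 2 • ∑ i, ∑ j ∈ Ioi i, g i j + ∑ i, g i i := by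
  have hoff : ∑ i, ∑ j ∈ Ioi i, (g i j + g i j) = ∑ i, ∑ j ∈ {i}ᶜ, g i j := by
    simpa only [hg] using sum_sum_Ioi_add_eq_sum_sum_off_diag g
  simp only [← sum_nsmul, two_nsmul, ← sum_add_distrib, hoff]
  exact sum_congr rfl fun i _ => Fintype.sum_eq_sum_compl_add i (g i)

def efPairing {n : ℕ} (x y : Fin n ⊕ Fin n → ℂ) : ℂ :=
  ∑ i, x (Sum.inl i) * y (Sum.inr i)

theorem efPairing_add_efPairing {n : ℕ} (x y : Fin n ⊕ Fin n → ℂ) :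
    efPairing x y + efPairing y x
      = ∑ i, (x (Sum.inl i) * y (Sum.inr i) + x (Sum.inr i) * y (Sum.inl i)) := by
  simp only [efPairing, ← sum_add_distrib, mul_comm (y _)]

section PluckerSums

variable {n : ℕ} (u v : Fin n ⊕ Fin n → ℂ)

theorem pluck_self (a : Fin n ⊕ Fin n) : pluck u v a a = 0 :=
  sub_self _

theorem sum_pluck_inl_inr :
    ∑ i, pluck u v (Sum.inl i) (Sum.inr i) = efPairing u v - efPairing v u := by
  simp only [pluck, efPairing, ← sum_sub_distrib, mul_comm (u (Sum.inr _))]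

theorem sum_sum_pluck_inl_inl_mul_pluck_inr_inr :
    ∑ i, ∑ j, pluck u v (Sum.inl i) (Sum.inl j) * pluck u v (Sum.inr i) (Sum.inr j)
      = 2 * (efPairing u u * efPairing v v - efPairing u v * efPairing v u) := by
  calc _ = ∑ i, ∑ j,
        (u (Sum.inl i) * u (Sum.inr i) * (v (Sum.inl j) * v (Sum.inr j))
          - u (Sum.inl i) * v (Sum.inr i) * (v (Sum.inl j) * u (Sum.inr j))
          - v (Sum.inl i) * u (Sum.inr i) * (u (Sum.inl j) * v (Sum.inr j))
          + v (Sum.inl i) * v (Sum.inr i) * (u (Sum.inl j) * u (Sum.inr j))) :=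
        sum_congr rfl fun i _ => sum_congr rfl fun j _ => by unfold pluck; ring
    _ = _ := by
        simp only [sum_add_distrib, sum_sub_distrib, ← mul_sum, ← sum_mul, efPairing]
        ring

theorem sum_sum_pluck_inl_inr_mul_pluck_inl_inr :
    ∑ i, ∑ j, pluck u v (Sum.inl i) (Sum.inr j) * pluck u v (Sum.inl j) (Sum.inr i)
      = efPairing u v ^ 2 + efPairing v u ^ 2 - 2 * efPairing u u * efPairing v v := by
  calc _ = ∑ i, ∑ j,
        (u (Sum.inl i) * v (Sum.inr i) * (u (Sum.inl j) * v (Sum.inr j))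
          - u (Sum.inl i) * u (Sum.inr i) * (v (Sum.inl j) * v (Sum.inr j))
          - v (Sum.inl i) * v (Sum.inr i) * (u (Sum.inl j) * u (Sum.inr j))
          + v (Sum.inl i) * u (Sum.inr i) * (v (Sum.inl j) * u (Sum.inr j))) :=
        sum_congr rfl fun i _ => sum_congr rfl fun j _ => by unfold pluck; ring
    _ = _ := by
        simp only [sum_add_distrib, sum_sub_distrib, ← mul_sum, ← sum_mul, efPairing]
        ring

end PluckerSums

theorem isotropic_plane_plucker_sums_general (n : ℕ)
    (u v : Fin n ⊕ Fin n → ℂ)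
    (huu : (∑ i : Fin n, (u (Sum.inl i) * u (Sum.inr i)
              + u (Sum.inr i) * u (Sum.inl i))) = 0)
    (huv : (∑ i : Fin n, (u (Sum.inl i) * v (Sum.inr i)
              + u (Sum.inr i) * v (Sum.inl i))) = 0) :
    (∑ i : Fin n, ∑ j ∈ Finset.Ioi i,
        pluck u v (Sum.inl i) (Sum.inl j) * pluck u v (Sum.inr i) (Sum.inr j))
      = (∑ i : Fin n, ∑ j ∈ Finset.Ioi i,
          pluck u v (Sum.inl i) (Sum.inr i) * pluck u v (Sum.inl j) (Sum.inr j)) / 2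
        + (∑ i : Fin n, (pluck u v (Sum.inl i) (Sum.inr i)) ^ 2) / 4 ∧
    (∑ i : Fin n, ∑ j ∈ Finset.Ioi i,
        pluck u v (Sum.inl i) (Sum.inr j) * pluck u v (Sum.inl j) (Sum.inr i))
      = (∑ i : Fin n, ∑ j ∈ Finset.Ioi i,
          pluck u v (Sum.inl i) (Sum.inr i) * pluck u v (Sum.inl j) (Sum.inr j)) / 2
        - (∑ i : Fin n, (pluck u v (Sum.inl i) (Sum.inr i)) ^ 2) / 4 := by
  rw [← efPairing_add_efPairing] at huu huv
  have hu : efPairing u u = 0 := add_self_eq_zero.mp huu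
  have hvu : efPairing v u = -efPairing u v := eq_neg_of_add_eq_zero_right huv
  have h₁ := sum_sum_eq_two_nsmul_sum_sum_Ioi_add_sum_diag
    (fun i j => pluck u v (Sum.inl i) (Sum.inr i) * pluck u v (Sum.inl j) (Sum.inr j))
    fun _ _ => mul_comm _ _
  have h₂ := sum_sum_eq_two_nsmul_sum_sum_Ioi_add_sum_diag
    (fun i j => pluck u v (Sum.inl i) (Sum.inl j) * pluck u v (Sum.inr i) (Sum.inr j))
    fun _ _ => by unfold pluck; ring
  have h₃ := sum_sum_eq_two_nsmul_sum_sum_Ioi_add_sum_diag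
    (fun i j => pluck u v (Sum.inl i) (Sum.inr j) * pluck u v (Sum.inl j) (Sum.inr i))
    fun _ _ => by unfold pluck; ring
  rw [← sum_mul_sum, sum_pluck_inl_inr, hvu] at h₁
  rw [sum_sum_pluck_inl_inl_mul_pluck_inr_inr, hu, hvu] at h₂
  rw [sum_sum_pluck_inl_inr_mul_pluck_inl_inr, hu, hvu] at h₃
  simp only [pluck_self, mul_zero, sum_const_zero, add_zero] at h₂
  simp only [← sq] at h₁ h₃
  constructor
  · linear_combination h₁ / 4 - h₂ / 2
  · linear_combination h₁ / 4 - h₃ / 2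

/-- Quadratic identities on the orthogonal Grassmannian `OG(2,2n)`:
for an isotropic plane `⟨u,v⟩` (w.r.t. the hyperbolic form), the sums
`I₂ = I₁/2 + I₀/4` and `I₃ = I₁/2 − I₀/4`. -/
theorem isotropic_plane_plucker_sums (n : ℕ) (hn : 1 ≤ n)
    (u v : Fin n ⊕ Fin n → ℂ)
    (huu : (∑ i : Fin n, (u (Sum.inl i) * u (Sum.inr i)
              + u (Sum.inr i) * u (Sum.inl i))) = 0)
    (hvv : (∑ i : Fin n, (v (Sum.inl i) * v (Sum.inr i)
              + v (Sum.inr i) * v (Sum.inl i))) = 0)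
    (huv : (∑ i : Fin n, (u (Sum.inl i) * v (Sum.inr i)
              + u (Sum.inr i) * v (Sum.inl i))) = 0) :
    (∑ i : Fin n, ∑ j ∈ Finset.Ioi i,
        pluck u v (Sum.inl i) (Sum.inl j) * pluck u v (Sum.inr i) (Sum.inr j))
      = (∑ i : Fin n, ∑ j ∈ Finset.Ioi i,
          pluck u v (Sum.inl i) (Sum.inr i) * pluck u v (Sum.inl j) (Sum.inr j)) / 2
        + (∑ i : Fin n, (pluck u v (Sum.inl i) (Sum.inr i)) ^ 2) / 4 ∧
    (∑ i : Fin n, ∑ j ∈ Finset.Ioi i,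
        pluck u v (Sum.inl i) (Sum.inr j) * pluck u v (Sum.inl j) (Sum.inr i))
      = (∑ i : Fin n, ∑ j ∈ Finset.Ioi i,
          pluck u v (Sum.inl i) (Sum.inr i) * pluck u v (Sum.inl j) (Sum.inr j)) / 2
        - (∑ i : Fin n, (pluck u v (Sum.inl i) (Sum.inr i)) ^ 2) / 4 :=
  isotropic_plane_plucker_sums_general n u v huu huv
end

section
/- Let u, v, w, x_1, x_2, x_3 be complex numbers satisfying the Hesse cubic relation x_1 x_2 x_3 (u^3 + v^3 + w^3) = (x_1^3 + x_2^3 + x_3^3) u v w. Define y_1 = u^2 x_2 x_3 − v w x_1^2, y_2 = v^2 x_1 x_3 − u w x_2^2, y_3 = w^2 x_1 x_2 − u v x_3^2. Then (y_1, y_2, y_3) also satisfies the same Hesse cubic relation: y_1 y_2 y_3 (u^3 + v^3 + w^3) = (y_1^3 + y_2^3 + y_3^3) u v w. -/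
/-- The Cremona transformation implementing the correspondence `p₁₂` preserves
the Hesse cubic: if `(x₁,x₂,x₃)` satisfies the Hesse relation, so does
`(y₁,y₂,y₃)` with `y₁ = u²x₂x₃ − vwx₁²`, etc. -/
theorem cremona_preserves_hesse_cubic (u v w x₁ x₂ x₃ : ℂ)
    (h : x₁ * x₂ * x₃ * (u ^ 3 + v ^ 3 + w ^ 3)
          = (x₁ ^ 3 + x₂ ^ 3 + x₃ ^ 3) * (u * v * w)) :
    (u ^ 2 * x₂ * x₃ - v * w * x₁ ^ 2)
      * (v ^ 2 * x₁ * x₃ - u * w * x₂ ^ 2)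
      * (w ^ 2 * x₁ * x₂ - u * v * x₃ ^ 2)
      * (u ^ 3 + v ^ 3 + w ^ 3)
    = ((u ^ 2 * x₂ * x₃ - v * w * x₁ ^ 2) ^ 3
        + (v ^ 2 * x₁ * x₃ - u * w * x₂ ^ 2) ^ 3
        + (w ^ 2 * x₁ * x₂ - u * v * x₃ ^ 2) ^ 3) * (u * v * w) := by
  linear_combination ((-1)*u^3*v^3*x₃^3 + (-1)*u^3*w^3*x₂^3 + 3*u^2*v^2*w^2*x₁*x₂*x₃ + (-1)*v^3*w^3*x₁^3) * h
end

section
/- For every integer x ≥ 0, the Verlinde number ((x+2)/2)^3 · ∑_{i=1}^{x+1} sin(iπ/(x+2))^{−6} equals the value at x of the degree nine polynomial 1 + (233/70)x + (1979/420)x^2 + (29041/7560)x^3 + (31/15)x^4 + (71/90)x^5 + (13/60)x^6 + (103/2520)x^7 + (1/210)x^8 + (1/3780)x^9. -/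
/-!
Write `n = x + 2`, `ζ = exp (2πi / n)` and `w_k = (1 - ζ^k)⁻¹` for `0 < k < n`. Since
`sin (kπ/n)⁻² = 4 w_k (1 - w_k)`, we get `∑ sin (kπ/n)⁻⁶ = 64 ∑ (w_k - w_k²)³`, a combination of the
power sums `p_3, …, p_6` of the `w_k`. From `(X + 1)^n - 1 = X ∏ (X + 1 - ζ^k)` the elementary symmetric
functions of the `1 - ζ^k` are binomial coefficients, hence those of their inverses are
`e_j(w) = C(n, j + 1) / n`, and Newton's identities turn these into polynomials in `n`.
-/

open Finset Polynomial Real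

namespace Finset

variable {ι R : Type*}

theorem sum_range_esymm_mul_psum [CommRing R] (s : Finset ι) (f : ι → R) (k : ℕ) :
    ∑ j ∈ range k, (-1) ^ j * (∑ t ∈ s.powersetCard j, ∏ i ∈ t, f i) * ∑ i ∈ s, f i ^ (k - j)
      = (-1) ^ (k + 1) * k * ∑ t ∈ s.powersetCard k, ∏ i ∈ t, f i := by
  have h := congrArg (MvPolynomial.aeval fun i : s ↦ f i) (MvPolynomial.mul_esymm_eq_sum s R k)
  simp only [map_mul, map_sum, map_pow, map_neg, map_one, map_natCast,
    MvPolynomial.aeval_esymm_eq_multiset_esymm, MvPolynomial.psum, MvPolynomial.aeval_X] at h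
  have hval : (univ : Finset s).val.map (fun i : s ↦ f i) = s.val.map f := by
    rw [univ_eq_attach, attach_val]
    exact Multiset.attach_map_val' s.val f
  have hpsum (j : ℕ) : ∑ i : s, f i ^ j = ∑ i ∈ s, f i ^ j := sum_coe_sort s (f · ^ j)
  rw [hval, esymm_map_val, sum_filter, Nat.sum_antidiagonal_eq_sum_range_succ_mk,
    sum_range_succ, sum_ite_of_true fun j hj ↦ mem_range.mp hj] at h
  simp only [esymm_map_val, hpsum, lt_self_iff_false, if_false, add_zero] at h
  have hsign : (-1 : R) ^ (k + 1) * (-1) ^ (k + 1) = 1 := by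
    rw [← mul_pow, neg_one_mul, neg_neg, one_pow]
  rw [mul_assoc, h, ← mul_assoc, hsign, one_mul]

theorem sum_powersetCard_prod_inv [Field R] [DecidableEq ι] (s : Finset ι) (f : ι → R)
    (hf : ∀ i ∈ s, f i ≠ 0) {k : ℕ} (hk : k ≤ #s) :
    ∑ t ∈ s.powersetCard k, ∏ i ∈ t, (f i)⁻¹
      = (∑ t ∈ s.powersetCard (#s - k), ∏ i ∈ t, f i) / ∏ i ∈ s, f i := by
  rw [eq_div_iff (prod_ne_zero_iff.mpr hf), sum_mul]
  refine sum_nbij' (s \ ·) (s \ ·) ?_ ?_ ?_ ?_ ?_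
  · intro t ht
    simp only [mem_powersetCard] at ht ⊢
    exact ⟨sdiff_subset, by rw [card_sdiff_of_subset ht.1, ht.2]⟩
  · intro t ht
    simp only [mem_powersetCard] at ht ⊢
    exact ⟨sdiff_subset, by rw [card_sdiff_of_subset ht.1, ht.2]; omega⟩
  · exact fun t ht ↦ sdiff_sdiff_eq_self (mem_powersetCard.mp ht).1
  · exact fun t ht ↦ sdiff_sdiff_eq_self (mem_powersetCard.mp ht).1
  · intro t ht
    simp only [mem_powersetCard] at ht
    rw [← prod_sdiff ht.1, prod_inv_distrib, mul_comm (∏ i ∈ s \ t, f i), ← mul_assoc,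
      inv_mul_cancel₀ (prod_ne_zero_iff.mpr fun i hi ↦ hf i (ht.1 hi)), one_mul]

end Finset

theorem Nat.cast_choose_succ_div {K : Type*} [Field K] [CharZero K] {n : ℕ} (hn : n ≠ 0) (k : ℕ) :
    (n.choose (k + 1) : K) / n
      = (descPochhammer K k).eval ((n : K) - 1) / (k + 1).factorial := by
  rw [Nat.cast_choose_eq_descPochhammer_div, descPochhammer_succ_left, eval_mul, eval_comp,
    eval_sub, eval_X, eval_one]
  field_simp

namespace IsPrimitiveRoot

variable {K : Type*} [Field K] {ζ : K} {n : ℕ}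

theorem prod_X_add_one_sub_pow_mul_X (hζ : IsPrimitiveRoot ζ n) (hn : 0 < n) :
    (∏ i ∈ Ico 1 n, (X + C (1 - ζ ^ i))) * X = (X + 1) ^ n - 1 := by
  have h := congrArg (·.comp (X + 1)) (X_pow_sub_C_eq_prod hζ hn (one_pow n))
  simp only [mul_one, C_1, sub_comp, pow_comp, X_comp, one_comp, Polynomial.prod_comp, C_comp] at h
  rw [h, prod_range_eq_mul_Ico _ hn, mul_comm, pow_zero, C_1, add_sub_cancel_right]
  congr 1
  refine prod_congr rfl fun i _ ↦ ?_
  rw [C_sub, C_1]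
  ring

theorem sum_powersetCard_prod_one_sub_pow (hζ : IsPrimitiveRoot ζ n) {k : ℕ} (hk : k < n) :
    ∑ t ∈ (Ico 1 n).powersetCard k, ∏ i ∈ t, (1 - ζ ^ i) = n.choose k := by
  have hcard : #(Ico 1 n) = n - 1 := Nat.card_Ico 1 n
  have h := prod_X_add_C_coeff (Ico 1 n) (fun i ↦ 1 - ζ ^ i) (k := n - 1 - k) (by omega)
  rw [hcard, Nat.sub_sub_self (by omega), ← coeff_mul_X,
    hζ.prod_X_add_one_sub_pow_mul_X (by omega), coeff_sub, coeff_X_add_one_pow, coeff_one,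
    if_neg (by omega), sub_zero, show n - 1 - k + 1 = n - k by omega, Nat.choose_symm hk.le] at h
  exact h.symm

theorem one_sub_pow_ne_zero (hζ : IsPrimitiveRoot ζ n) {i : ℕ} (hi : i ∈ Ico 1 n) :
    1 - ζ ^ i ≠ 0 := by
  rw [mem_Ico] at hi
  exact sub_ne_zero.mpr (hζ.pow_ne_one_of_pos_of_lt (by omega) hi.2).symm

theorem sum_powersetCard_prod_inv_one_sub_pow (hζ : IsPrimitiveRoot ζ n) (hn : 0 < n) (k : ℕ) :
    ∑ t ∈ (Ico 1 n).powersetCard k, ∏ i ∈ t, (1 - ζ ^ i)⁻¹ = n.choose (k + 1) / n := by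
  have hcard : #(Ico 1 n) = n - 1 := Nat.card_Ico 1 n
  rcases lt_or_ge k n with hk | hk
  · have hprod : ∏ i ∈ Ico 1 n, (1 - ζ ^ i) = n := by
      rw [← sum_singleton (fun t ↦ ∏ i ∈ t, (1 - ζ ^ i)) (Ico 1 n), ← powersetCard_self, hcard,
        hζ.sum_powersetCard_prod_one_sub_pow (by omega), Nat.choose_symm hn, Nat.choose_one_right]
    rw [Finset.sum_powersetCard_prod_inv _ _ (fun i hi ↦ hζ.one_sub_pow_ne_zero hi) (by omega),
      hprod, hcard, hζ.sum_powersetCard_prod_one_sub_pow (by omega),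
      show n - 1 - k = n - (k + 1) by omega, Nat.choose_symm hk]
  · rw [powersetCard_eq_empty.mpr (by omega), sum_empty, Nat.choose_eq_zero_of_lt (by omega),
      Nat.cast_zero, zero_div]

theorem sum_inv_one_sub_pow_mul_one_sub_inv_pow_three [CharZero K] (hζ : IsPrimitiveRoot ζ n)
    (hn : 0 < n) :
    ∑ i ∈ Ico 1 n, ((1 - ζ ^ i)⁻¹ * (1 - (1 - ζ ^ i)⁻¹)) ^ 3
      = ((n : K) ^ 2 - 1) * (2 * n ^ 4 + 23 * n ^ 2 + 191) / 60480 := by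
  set p : ℕ → K := fun k ↦ ∑ i ∈ Ico 1 n, (1 - ζ ^ i)⁻¹ ^ k with hp
  have newton (k : ℕ) : ∑ j ∈ range k, (-1) ^ j * ((n.choose (j + 1) : K) / n) * p (k - j)
      = (-1) ^ (k + 1) * k * ((n.choose (k + 1) : K) / n) := by
    simpa only [hζ.sum_powersetCard_prod_inv_one_sub_pow hn] using
      (Ico 1 n).sum_range_esymm_mul_psum (fun i ↦ (1 - ζ ^ i)⁻¹) k
  simp only [Nat.cast_choose_succ_div hn.ne'] at newton
  obtain ⟨h1, h2, h3, h4, h5, h6⟩ := And.intro (newton 1) <| And.intro (newton 2) <|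
    And.intro (newton 3) <| And.intro (newton 4) <| And.intro (newton 5) (newton 6)
  simp only [sum_range_succ, sum_range_zero, descPochhammer_succ_right, descPochhammer_zero,
    eval_mul, eval_sub, eval_X, eval_natCast, eval_one, Nat.factorial] at h1 h2 h3 h4 h5 h6
  norm_num at h1 h2 h3 h4 h5 h6
  rw [h1] at h2
  have hp2 : p 2 = -((n - 1) * (n - 5) / 12) := by linear_combination h2
  rw [h1, hp2] at h3
  have hp3 : p 3 = -((n - 1) * (n - 3) / 8) := by linear_combination h3
  rw [h1, hp2, hp3] at h4
  have hp4 : p 4 = ((n : K) ^ 4 - 110 * n ^ 2 + 360 * n - 251) / 720 := by linear_combination h4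
  rw [h1, hp2, hp3, hp4] at h5
  have hp5 : p 5 = ((n : K) ^ 4 - 50 * n ^ 2 + 144 * n - 95) / 288 := by linear_combination h5
  rw [h1, hp2, hp3, hp4, hp5] at h6
  have hp6 : p 6
      = (-2 * (n : K) ^ 6 + 357 * n ^ 4 - 11508 * n ^ 2 + 30240 * n - 19087) / 60480 := by
    linear_combination h6
  calc ∑ i ∈ Ico 1 n, ((1 - ζ ^ i)⁻¹ * (1 - (1 - ζ ^ i)⁻¹)) ^ 3
      = p 3 - 3 * p 4 + 3 * p 5 - p 6 := by
        simp only [hp, mul_sum, ← sum_sub_distrib, ← sum_add_distrib]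
        exact sum_congr rfl fun i _ ↦ by ring
    _ = _ := by rw [hp3, hp4, hp5, hp6]; ring

end IsPrimitiveRoot

theorem Complex.inv_sin_sq (θ : ℂ) :
    (sin θ)⁻¹ ^ 2 = 4 * ((1 - exp (2 * θ * I))⁻¹ * (1 - (1 - exp (2 * θ * I))⁻¹)) := by
  set u := exp (θ * I)
  have hexp : exp (2 * θ * I) = u ^ 2 := by rw [← exp_nat_mul]; ring_nf
  have hsin : sin θ = (1 - u ^ 2) * I / (2 * u) := by
    have hu : u ≠ 0 := exp_ne_zero _
    rw [sin, neg_mul, exp_neg]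
    field_simp
    ring
  rw [hsin, hexp]
  rcases eq_or_ne (1 - u ^ 2) 0 with h | h
  · simp [h] -- `sin θ = 0`, and both sides are `0` because `0⁻¹ = 0`
  · field_simp
    rw [I_sq]
    ring

theorem sum_inv_sin_pow_six (n : ℕ) (hn : 0 < n) :
    ∑ i ∈ Ico 1 n, (sin (i * π / n))⁻¹ ^ 6
      = ((n : ℝ) ^ 2 - 1) * (2 * n ^ 4 + 23 * n ^ 2 + 191) / 945 := by
  set ζ := Complex.exp (2 * π * Complex.I / n)
  have hterm (i : ℕ) : (((sin (i * π / n))⁻¹ ^ 6 : ℝ) : ℂ)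
      = 64 * ((1 - ζ ^ i)⁻¹ * (1 - (1 - ζ ^ i)⁻¹)) ^ 3 := by
    rw [← Complex.exp_nat_mul]
    push_cast
    rw [show 6 = 2 * 3 by rfl, pow_mul, Complex.inv_sin_sq]
    ring_nf
  apply Complex.ofReal_injective
  rw [Complex.ofReal_sum, sum_congr rfl fun i _ ↦ hterm i, ← mul_sum,
    (Complex.isPrimitiveRoot_exp n hn.ne').sum_inv_one_sub_pow_mul_one_sub_inv_pow_three hn]
  push_cast
  ring

/-- The genus-four Verlinde numbers agree with the degree nine Hilbert
polynomial of the orbital degeneracy locus `D_{Y₅}(v)`. -/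
theorem verlinde_genus_four_polynomial (x : ℕ) :
    (((x : ℝ) + 2) / 2) ^ 3
        * (∑ i ∈ Finset.Icc 1 (x + 1),
            (Real.sin ((i : ℝ) * Real.pi / ((x : ℝ) + 2)))⁻¹ ^ 6)
      = 1 + (233 / 70) * (x : ℝ) + (1979 / 420) * (x : ℝ) ^ 2
        + (29041 / 7560) * (x : ℝ) ^ 3 + (31 / 15) * (x : ℝ) ^ 4
        + (71 / 90) * (x : ℝ) ^ 5 + (13 / 60) * (x : ℝ) ^ 6
        + (103 / 2520) * (x : ℝ) ^ 7 + (1 / 210) * (x : ℝ) ^ 8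
        + (1 / 3780) * (x : ℝ) ^ 9 := by
  have hIcc : Icc 1 (x + 1) = Ico 1 (x + 2) := (Ico_add_one_right_eq_Icc 1 (x + 1)).symm
  have h := sum_inv_sin_pow_six (x + 2) (by omega)
  push_cast at h
  rw [hIcc, h]
  ring
end
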